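/- Let a finite group G act on [n], let all blocks have m variables, and let p ∈ 𝒫 be G-invariant, a sum of squares, and satisfy deg_loc(p) ≤ 2d. Set S_i := {k ∈ ℕ^m : |k| ≤ d} for each i ∈ [n] and S := S₀ × ⋯ × Sₙ, with G acting on S by g·(k₀,…,kₙ) := (k_{g⁻¹·0},…,k_{g⁻¹·n}). Then there exists a family of polynomials (q_k)_{k ∈ S} in 𝒫 such that: (a) q_{g·k} = g·q_k for all g ∈ G and k ∈ S (G-invariance of the family); (b) p = Σ_{k ∈ S} q_k²; and (c) there exist a finite index set I and polynomials q^[i]_{κ,j} ∈ ℝ[x^[i]] (i ∈ [n], κ ∈ S_i, j ∈ I) such that q_k = Σ_{j ∈ I} q^[0]_{k₀,j}(x^[0]) ⋯ q^[n]_{kₙ,j}(x^[n]) for every k = (k₀,…,kₙ) ∈ S, i.e. the local factor at site i depends only on k_i. -/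

import Mathlib

namespace PolyDec

open MvPolynomial

attribute [local instance] Classical.propDecidable

noncomputable section

/-! ### Weighted simplicial complexes -/

/-- `Ω` is a weighted simplicial complex on `[n] = {0,…,n}`. -/
def IsWSC {n : ℕ} (Ω : Finset (Fin (n + 1)) → ℕ) : Prop :=
  (∀ S T : Finset (Fin (n + 1)), S ⊆ T → Ω S ∣ Ω T) ∧ ∀ i : Fin (n + 1), Ω {i} ≠ 0

/-- `F` is a facet of `Ω`: a maximal simplex. -/
def IsFacet {n : ℕ} (Ω : Finset (Fin (n + 1)) → ℕ) (F : Finset (Fin (n + 1))) : Prop :=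
  Ω F ≠ 0 ∧ ∀ S : Finset (Fin (n + 1)), Ω S ≠ 0 → F ⊆ S → S = F

/-- `Ω` is connected: any two vertices are joined by a chain of vertices such that
consecutive ones share a facet. -/
def Conn {n : ℕ} (Ω : Finset (Fin (n + 1)) → ℕ) : Prop :=
  ∀ i j : Fin (n + 1),
    Relation.ReflTransGen
      (fun a b => ∃ F : Finset (Fin (n + 1)), IsFacet Ω F ∧ a ∈ F ∧ b ∈ F) i j

/-- The multiset of facets `ℱ̃`: each facet `F` appears with multiplicity `Ω F`. -/
abbrev MultiFacet {n : ℕ} (Ω : Finset (Fin (n + 1)) → ℕ) : Type :=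
  Σ F : {F : Finset (Fin (n + 1)) // IsFacet Ω F}, Fin (Ω F.1)

/-- The sub-multiset `ℱ̃ᵢ` of multifacets containing the vertex `i`. -/
abbrev MFi {n : ℕ} (Ω : Finset (Fin (n + 1)) → ℕ) (i : Fin (n + 1)) : Type :=
  {F : MultiFacet Ω // i ∈ F.1.1}

/-- Restriction `α|ᵢ` of `α : ℱ̃ → I` to `ℱ̃ᵢ`. -/
def restr {n : ℕ} {Ω : Finset (Fin (n + 1)) → ℕ} {I : Type} (α : MultiFacet Ω → I)
    (i : Fin (n + 1)) : MFi Ω i → I :=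
  fun F => α F.1

/-! ### Group actions on a weighted simplicial complex -/

/-- An action of a group `G` on the weighted simplicial complex `Ω`:
an action on the vertices leaving `Ω` invariant, together with a refinement to an action on
the multiset of facets which is compatible with the collapse map. -/
structure GAct {n : ℕ} (Ω : Finset (Fin (n + 1)) → ℕ) (G : Type) [Group G] where
  act : G →* Equiv.Perm (Fin (n + 1))
  omega_inv : ∀ (g : G) (S : Finset (Fin (n + 1))), Ω (S.image (act g)) = Ω S
  actF : G →* Equiv.Perm (MultiFacet Ω)
  collapse : ∀ (g : G) (F : MultiFacet Ω), (actF g F).1.1 = F.1.1.image (act g)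

variable {n : ℕ} {Ω : Finset (Fin (n + 1)) → ℕ} {G : Type} [Group G]

/-- The action is free on `ℱ̃`. -/
def GAct.Free (A : GAct Ω G) : Prop :=
  ∀ (g : G) (F : MultiFacet Ω), A.actF g F = F → g = 1

/-- The action on the vertices is blending. -/
def GAct.Blending (A : GAct Ω G) : Prop :=
  ∀ gs : Fin (n + 1) → G,
    (Function.Surjective fun i => A.act (gs i) i) →
      ∃ g : G, ∀ i, A.act g i = A.act (gs i) i

theorem GAct.mem_shift (A : GAct Ω G) (g : G) (i : Fin (n + 1)) (F : MFi Ω (A.act g i)) :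
    i ∈ (A.actF g⁻¹ F.1).1.1 := by
  rw [A.collapse]
  refine Finset.mem_image.2 ⟨A.act g i, F.2, ?_⟩
  rw [map_inv]
  first
  | exact Equiv.symm_apply_apply _ _
  | simp

/-- For `β : ℱ̃ᵢ → I`, the shifted function `ᵍβ : ℱ̃_{g·i} → I`, `(ᵍβ)(F) = β (g⁻¹·F)`. -/
def GAct.shift (A : GAct Ω G) (g : G) (i : Fin (n + 1)) {I : Type} (β : MFi Ω i → I) :
    MFi Ω (A.act g i) → I :=
  fun F => β ⟨A.actF g⁻¹ F.1, A.mem_shift g i F⟩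

/-! ### Polynomial spaces -/

/-- The space `𝒫 = ℝ[x⁽⁰⁾,…,x⁽ⁿ⁾]`, where block `i` has `m i` variables. -/
abbrev PSpace {n : ℕ} (m : Fin (n + 1) → ℕ) : Type :=
  MvPolynomial (Σ i : Fin (n + 1), Fin (m i)) ℝ

/-- The local space `ℝ[x⁽ⁱ⁾]`. -/
abbrev LSpace {n : ℕ} (m : Fin (n + 1) → ℕ) (i : Fin (n + 1)) : Type :=
  MvPolynomial (Fin (m i)) ℝ

/-- The inclusion `ℝ[x⁽ⁱ⁾] → 𝒫`. -/
def emb {n : ℕ} (m : Fin (n + 1) → ℕ) (i : Fin (n + 1)) : LSpace m i →ₐ[ℝ] PSpace m :=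
  rename fun j => (⟨i, j⟩ : Σ i : Fin (n + 1), Fin (m i))

variable {m : Fin (n + 1) → ℕ}

/-- The variable permutation `x⁽ⁱ⁾ ↦ x⁽ᵍ·ⁱ⁾` induced by `g`. -/
def permVar (A : GAct Ω G) (hm : ∀ (g : G) (i : Fin (n + 1)), m (A.act g i) = m i) (g : G) :
    (Σ i : Fin (n + 1), Fin (m i)) → Σ i : Fin (n + 1), Fin (m i) :=
  fun v => ⟨A.act g v.1, Fin.cast (hm g v.1).symm v.2⟩

/-- `p` is `G`-invariant: `p(x⁽ᵍ⁰⁾,…,x⁽ᵍⁿ⁾) = p(x⁽⁰⁾,…,x⁽ⁿ⁾)` for all `g ∈ G`. -/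
def GInvPoly (A : GAct Ω G) (hm : ∀ (g : G) (i : Fin (n + 1)), m (A.act g i) = m i)
    (p : PSpace m) : Prop :=
  ∀ g : G, rename (permVar A hm g) p = p

/-! ### Sums of squares, cones -/

/-- `p` is a sum of squares. -/
def IsSos {σ : Type} (p : MvPolynomial σ ℝ) : Prop :=
  ∃ (N : ℕ) (q : Fin N → MvPolynomial σ ℝ), p = ∑ k : Fin N, q k ^ 2

/-- `C` is a convex cone. -/
def IsConvexConeSet {V : Type} [AddCommMonoid V] [Module ℝ V] (C : Set V) : Prop :=
  ∀ p ∈ C, ∀ q ∈ C, ∀ a b : ℝ, 0 ≤ a → 0 ≤ b → a • p + b • q ∈ C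

/-- The local cones agree along orbits, `C⁽ᵍ·ⁱ⁾ = C⁽ⁱ⁾` (under the renaming identification). -/
def ConeCompat (A : GAct Ω G) (hm : ∀ (g : G) (i : Fin (n + 1)), m (A.act g i) = m i)
    (C : ∀ i : Fin (n + 1), Set (LSpace m i)) : Prop :=
  ∀ (g : G) (i : Fin (n + 1)) (q : LSpace m (A.act g i)),
    q ∈ C (A.act g i) ↔ rename (Fin.cast (hm g i)) q ∈ C i

/-- The separable cone `C_sep = C⁽⁰⁾ ⊗ ⋯ ⊗ C⁽ⁿ⁾`. -/
def SepCone {n : ℕ} (m : Fin (n + 1) → ℕ) (C : ∀ i : Fin (n + 1), Set (LSpace m i)) :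
    Set (PSpace m) :=
  {p | ∃ (r : ℕ) (q : Fin r → ∀ i : Fin (n + 1), LSpace m i),
    (∀ j i, q j i ∈ C i) ∧ p = ∑ j : Fin r, ∏ i : Fin (n + 1), emb m i (q j i)}

/-! ### Decompositions and ranks -/

/-- `p` has an `Ω`-decomposition with index set of size `r`. -/
def HasODec {n : ℕ} (Ω : Finset (Fin (n + 1)) → ℕ) (m : Fin (n + 1) → ℕ) (p : PSpace m)
    (r : ℕ) : Prop :=
  ∃ q : ∀ i : Fin (n + 1), (MFi Ω i → Fin r) → LSpace m i,
    p = ∑ α : MultiFacet Ω → Fin r, ∏ i : Fin (n + 1), emb m i (q i (restr α i))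

/-- The `Ω`-rank of `p` (`⊤` if there is no decomposition). -/
def ORank {n : ℕ} (Ω : Finset (Fin (n + 1)) → ℕ) (m : Fin (n + 1) → ℕ) (p : PSpace m) : ℕ∞ :=
  ⨅ r : {r : ℕ // HasODec Ω m p r}, (r.1 : ℕ∞)

/-- `p` has an `(Ω,G)`-decomposition with index set of size `r`. -/
def HasOGDec (A : GAct Ω G) (hm : ∀ (g : G) (i : Fin (n + 1)), m (A.act g i) = m i)
    (p : PSpace m) (r : ℕ) : Prop :=
  ∃ q : ∀ i : Fin (n + 1), (MFi Ω i → Fin r) → LSpace m i,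
    (p = ∑ α : MultiFacet Ω → Fin r, ∏ i : Fin (n + 1), emb m i (q i (restr α i))) ∧
    ∀ (g : G) (i : Fin (n + 1)) (β : MFi Ω i → Fin r),
      rename (Fin.cast (hm g i)) (q (A.act g i) (A.shift g i β)) = q i β

/-- The `(Ω,G)`-rank of `p`. -/
def OGRank (A : GAct Ω G) (hm : ∀ (g : G) (i : Fin (n + 1)), m (A.act g i) = m i)
    (p : PSpace m) : ℕ∞ :=
  ⨅ r : {r : ℕ // HasOGDec A hm p r}, (r.1 : ℕ∞)

/-- `p` has a decomposition on the simplex `Σₙ` (a plain tensor decomposition) of size `r`. -/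
def HasTDec {n : ℕ} (m : Fin (n + 1) → ℕ) (p : PSpace m) (r : ℕ) : Prop :=
  ∃ q : Fin r → ∀ i : Fin (n + 1), LSpace m i,
    p = ∑ j : Fin r, ∏ i : Fin (n + 1), emb m i (q j i)

/-- The tensor rank `rank_{Σₙ}(p)`. -/
def TRank {n : ℕ} (m : Fin (n + 1) → ℕ) (p : PSpace m) : ℕ∞ :=
  ⨅ r : {r : ℕ // HasTDec m p r}, (r.1 : ℕ∞)

/-- Separable `Ω`-decomposition w.r.t. the local cones `C`. -/
def HasSepODec {n : ℕ} (Ω : Finset (Fin (n + 1)) → ℕ) (m : Fin (n + 1) → ℕ)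
    (C : ∀ i : Fin (n + 1), Set (LSpace m i)) (p : PSpace m) (r : ℕ) : Prop :=
  ∃ q : ∀ i : Fin (n + 1), (MFi Ω i → Fin r) → LSpace m i,
    (p = ∑ α : MultiFacet Ω → Fin r, ∏ i : Fin (n + 1), emb m i (q i (restr α i))) ∧
    ∀ i β, q i β ∈ C i

/-- The separable `Ω`-rank. -/
def SepORank {n : ℕ} (Ω : Finset (Fin (n + 1)) → ℕ) (m : Fin (n + 1) → ℕ)
    (C : ∀ i : Fin (n + 1), Set (LSpace m i)) (p : PSpace m) : ℕ∞ :=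
  ⨅ r : {r : ℕ // HasSepODec Ω m C p r}, (r.1 : ℕ∞)

/-- Separable `(Ω,G)`-decomposition w.r.t. the local cones `C`. -/
def HasSepOGDec (A : GAct Ω G) (hm : ∀ (g : G) (i : Fin (n + 1)), m (A.act g i) = m i)
    (C : ∀ i : Fin (n + 1), Set (LSpace m i)) (p : PSpace m) (r : ℕ) : Prop :=
  ∃ q : ∀ i : Fin (n + 1), (MFi Ω i → Fin r) → LSpace m i,
    (p = ∑ α : MultiFacet Ω → Fin r, ∏ i : Fin (n + 1), emb m i (q i (restr α i))) ∧
    (∀ (g : G) (i : Fin (n + 1)) (β : MFi Ω i → Fin r),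
      rename (Fin.cast (hm g i)) (q (A.act g i) (A.shift g i β)) = q i β) ∧
    ∀ i β, q i β ∈ C i

/-- The separable `(Ω,G)`-rank. -/
def SepOGRank (A : GAct Ω G) (hm : ∀ (g : G) (i : Fin (n + 1)), m (A.act g i) = m i)
    (C : ∀ i : Fin (n + 1), Set (LSpace m i)) (p : PSpace m) : ℕ∞ :=
  ⨅ r : {r : ℕ // HasSepOGDec A hm C p r}, (r.1 : ℕ∞)

/-- Separable decomposition on the simplex `Σₙ`. -/
def HasSepTDec {n : ℕ} (m : Fin (n + 1) → ℕ) (C : ∀ i : Fin (n + 1), Set (LSpace m i))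
    (p : PSpace m) (r : ℕ) : Prop :=
  ∃ q : Fin r → ∀ i : Fin (n + 1), LSpace m i,
    (∀ j i, q j i ∈ C i) ∧ p = ∑ j : Fin r, ∏ i : Fin (n + 1), emb m i (q j i)

/-- The separable rank on the simplex. -/
def SepTRank {n : ℕ} (m : Fin (n + 1) → ℕ) (C : ∀ i : Fin (n + 1), Set (LSpace m i))
    (p : PSpace m) : ℕ∞ :=
  ⨅ r : {r : ℕ // HasSepTDec m C p r}, (r.1 : ℕ∞)

/-- `p` has a sum-of-squares `(Ω,G)`-decomposition of size `r`: a `G`-invariant family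
`𝔮 = (q_k)` with `p = ∑ q_k²` together with an `(Ω,G)`-decomposition of the family. -/
def HasSosOGDec (A : GAct Ω G) (hm : ∀ (g : G) (i : Fin (n + 1)), m (A.act g i) = m i)
    (p : PSpace m) (r : ℕ) : Prop :=
  ∃ (s : Fin (n + 1) → ℕ) (hs : ∀ (g : G) (i : Fin (n + 1)), s (A.act g i) = s i)
    (q : ∀ i : Fin (n + 1), Fin (s i) → (MFi Ω i → Fin r) → LSpace m i),
    (p = ∑ k : ∀ i : Fin (n + 1), Fin (s i),
        (∑ α : MultiFacet Ω → Fin r, ∏ i : Fin (n + 1), emb m i (q i (k i) (restr α i))) ^ 2) ∧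
    ∀ (g : G) (i : Fin (n + 1)) (kk : Fin (s i)) (β : MFi Ω i → Fin r),
      rename (Fin.cast (hm g i))
        (q (A.act g i) (Fin.cast (hs g i).symm kk) (A.shift g i β)) = q i kk β

/-- The sos `(Ω,G)`-rank. -/
def SosOGRank (A : GAct Ω G) (hm : ∀ (g : G) (i : Fin (n + 1)), m (A.act g i) = m i)
    (p : PSpace m) : ℕ∞ :=
  ⨅ r : {r : ℕ // HasSosOGDec A hm p r}, (r.1 : ℕ∞)

/-! ### Local degree -/

/-- Every monomial of `p` has degree at most `d` in each block of variables. -/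
def locDegLE {n : ℕ} (m : Fin (n + 1) → ℕ) (p : PSpace m) (d : ℕ) : Prop :=
  ∀ s ∈ p.support, ∀ i : Fin (n + 1), (∑ j : Fin (m i), s ⟨i, j⟩) ≤ d

/-- The local degree of `p`. -/
def locDeg {n : ℕ} (m : Fin (n + 1) → ℕ) (p : PSpace m) : ℕ :=
  sInf {d : ℕ | locDegLE m p d}

/-! ### Tensor decompositions -/

/-- `(Ω,G)`-decomposition of a tensor `T ∈ ℝ^mv ⊗ ⋯ ⊗ ℝ^mv`. -/
def HasTOGDec (A : GAct Ω G) (mv : ℕ) (T : (Fin (n + 1) → Fin mv) → ℝ) (r : ℕ) : Prop :=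
  ∃ v : ∀ i : Fin (n + 1), (MFi Ω i → Fin r) → Fin mv → ℝ,
    (∀ jf : Fin (n + 1) → Fin mv,
      T jf = ∑ α : MultiFacet Ω → Fin r, ∏ i : Fin (n + 1), v i (restr α i) (jf i)) ∧
    ∀ (g : G) (i : Fin (n + 1)) (β : MFi Ω i → Fin r), v (A.act g i) (A.shift g i β) = v i β

/-- The `(Ω,G)`-rank of a tensor. -/
def TOGRank (A : GAct Ω G) (mv : ℕ) (T : (Fin (n + 1) → Fin mv) → ℝ) : ℕ∞ :=
  ⨅ r : {r : ℕ // HasTOGDec A mv T r}, (r.1 : ℕ∞)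

/-- Nonnegative `(Ω,G)`-decomposition of a tensor. -/
def HasNNTOGDec (A : GAct Ω G) (mv : ℕ) (T : (Fin (n + 1) → Fin mv) → ℝ) (r : ℕ) : Prop :=
  ∃ v : ∀ i : Fin (n + 1), (MFi Ω i → Fin r) → Fin mv → ℝ,
    (∀ jf : Fin (n + 1) → Fin mv,
      T jf = ∑ α : MultiFacet Ω → Fin r, ∏ i : Fin (n + 1), v i (restr α i) (jf i)) ∧
    (∀ (g : G) (i : Fin (n + 1)) (β : MFi Ω i → Fin r), v (A.act g i) (A.shift g i β) = v i β) ∧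
    ∀ i β j, 0 ≤ v i β j

/-- The nonnegative `(Ω,G)`-rank of a tensor. -/
def NNTOGRank (A : GAct Ω G) (mv : ℕ) (T : (Fin (n + 1) → Fin mv) → ℝ) : ℕ∞ :=
  ⨅ r : {r : ℕ // HasNNTOGDec A mv T r}, (r.1 : ℕ∞)

/-- Positive semidefinite `(Ω,G)`-decomposition of a tensor. -/
def HasPsdTOGDec (A : GAct Ω G) (mv : ℕ) (T : (Fin (n + 1) → Fin mv) → ℝ) (r : ℕ) : Prop :=
  ∃ E : ∀ i : Fin (n + 1), Fin mv → Matrix (MFi Ω i → Fin r) (MFi Ω i → Fin r) ℝ,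
    (∀ i j, (E i j).PosSemidef) ∧
    (∀ (g : G) (i : Fin (n + 1)) (j : Fin mv) (β β' : MFi Ω i → Fin r),
      E (A.act g i) j (A.shift g i β) (A.shift g i β') = E i j β β') ∧
    ∀ jf : Fin (n + 1) → Fin mv,
      T jf = ∑ α : MultiFacet Ω → Fin r, ∑ α' : MultiFacet Ω → Fin r,
        ∏ i : Fin (n + 1), E i (jf i) (restr α i) (restr α' i)

/-- The positive semidefinite `(Ω,G)`-rank of a tensor. -/
def PsdTOGRank (A : GAct Ω G) (mv : ℕ) (T : (Fin (n + 1) → Fin mv) → ℝ) : ℕ∞ :=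
  ⨅ r : {r : ℕ // HasPsdTOGDec A mv T r}, (r.1 : ℕ∞)

/-- The polynomial `p_T = ∑ T_{j₀…jₙ} (x⁽⁰⁾_{j₀})² ⋯ (x⁽ⁿ⁾_{jₙ})²` associated to a tensor. -/
def pT {n : ℕ} (mv : ℕ) (T : (Fin (n + 1) → Fin mv) → ℝ) :
    PSpace (fun _ : Fin (n + 1) => mv) :=
  ∑ jf : Fin (n + 1) → Fin mv, MvPolynomial.C (T jf) *
    ∏ i : Fin (n + 1), X (⟨i, jf i⟩ : Σ _ : Fin (n + 1), Fin mv) ^ 2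

/-! ### The Gram map -/

/-- Exponent vectors of monomials of degree at most `d` in `mv` variables. -/
abbrev Mon (mv d : ℕ) : Type := {k : Fin mv → Fin (d + 1) // (∑ j : Fin mv, (k j).val) ≤ d}

/-- The monomial at site `i` with exponent vector `k`. -/
def monAt {n : ℕ} {mv d : ℕ} (i : Fin (n + 1)) (k : Mon mv d) :
    PSpace (fun _ : Fin (n + 1) => mv) :=
  ∏ j : Fin mv, X (⟨i, j⟩ : Σ _ : Fin (n + 1), Fin mv) ^ (k.1 j).val

/-- The Gram map `𝒢(M) = 𝔪ᵗ M 𝔪`. -/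
def gram {n : ℕ} {mv d : ℕ}
    (M : Matrix (Fin (n + 1) → Mon mv d) (Fin (n + 1) → Mon mv d) ℝ) :
    PSpace (fun _ : Fin (n + 1) => mv) :=
  ∑ k : Fin (n + 1) → Mon mv d, ∑ k' : Fin (n + 1) → Mon mv d,
    M k k' • ∏ i : Fin (n + 1), (monAt i (k i) * monAt i (k' i))

/-! ### Homogeneous Gram map, norms -/

/-- Exponent vectors of monomials of degree exactly `d` in `mv + 1` variables. -/
abbrev MonH (mv d : ℕ) : Type :=
  {k : Fin (mv + 1) → Fin (d + 1) // (∑ j : Fin (mv + 1), (k j).val) = d}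

/-- The homogeneous monomial at site `i` with exponent vector `k`. -/
def monHAt {n : ℕ} {mv d : ℕ} (i : Fin (n + 1)) (k : MonH mv d) :
    PSpace (fun _ : Fin (n + 1) => mv + 1) :=
  ∏ j : Fin (mv + 1), X (⟨i, j⟩ : Σ _ : Fin (n + 1), Fin (mv + 1)) ^ (k.1 j).val

/-- The Gram map in the homogeneous setting. -/
def gramH {n : ℕ} {mv d : ℕ}
    (M : Matrix (Fin (n + 1) → MonH mv d) (Fin (n + 1) → MonH mv d) ℝ) :
    PSpace (fun _ : Fin (n + 1) => mv + 1) :=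
  ∑ k : Fin (n + 1) → MonH mv d, ∑ k' : Fin (n + 1) → MonH mv d,
    M k k' • ∏ i : Fin (n + 1), (monHAt i (k i) * monHAt i (k' i))

/-- The largest singular value (ℓ²-operator norm) of a real square matrix. -/
def sigmaMax {ι : Type} [Fintype ι] (M : Matrix ι ι ℝ) : ℝ :=
  sSup {r : ℝ | ∃ y : ι → ℝ, (∑ t, y t ^ 2) ≤ 1 ∧ r = Real.sqrt (∑ t, (M.mulVec y t) ^ 2)}

/-- The supremum norm of `p` on `𝕊 = 𝕊^m × ⋯ × 𝕊^m`. -/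
def InfNormH {n mv : ℕ} (p : PSpace (fun _ : Fin (n + 1) => mv + 1)) : ℝ :=
  sSup {r : ℝ | ∃ a : Fin (n + 1) → Fin (mv + 1) → ℝ,
    (∀ i, ∑ j, a i j ^ 2 = 1) ∧
    r = |MvPolynomial.eval (fun v : Σ _ : Fin (n + 1), Fin (mv + 1) => a v.1 v.2) p|}

/-- `p` is homogeneous of degree `d` in each block of variables separately. -/
def MultiHomog {n : ℕ} (m : Fin (n + 1) → ℕ) (d : ℕ) (p : PSpace m) : Prop :=
  ∀ s ∈ p.support, ∀ i : Fin (n + 1), (∑ j : Fin (m i), s ⟨i, j⟩) = d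

/-- `M` is a separable matrix: a sum of elementary tensors of psd matrices. -/
def SepGram {n : ℕ} {mv d : ℕ}
    (M : Matrix (Fin (n + 1) → MonH mv d) (Fin (n + 1) → MonH mv d) ℝ) : Prop :=
  ∃ (N : ℕ) (Ms : Fin N → ∀ _ : Fin (n + 1), Matrix (MonH mv d) (MonH mv d) ℝ),
    (∀ j i, (Ms j i).PosSemidef) ∧
    ∀ k k', M k k' = ∑ j : Fin N, ∏ i : Fin (n + 1), Ms j i (k i) (k' i)

/-- `μ(p)`: the smallest `λ > 0` such that `p = λ·𝒢(M)` for some `G`-invariant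
subnormalized separable matrix `M`. -/
def muP {n : ℕ} {Ω : Finset (Fin (n + 1)) → ℕ} {G : Type} [Group G] (mv d : ℕ) (A : GAct Ω G)
    (p : PSpace (fun _ : Fin (n + 1) => mv + 1)) : ℝ :=
  sInf {l : ℝ | 0 < l ∧
    ∃ M : Matrix (Fin (n + 1) → MonH mv d) (Fin (n + 1) → MonH mv d) ℝ,
      SepGram M ∧ (∑ k, M k k) ≤ 1 ∧
      (∀ (g : G) (k k' : Fin (n + 1) → MonH mv d),
        M (fun i => k (A.act g i)) (fun i => k' (A.act g i)) = M k k') ∧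
      p = l • gramH M}

/-! ### Factorizability -/

/-- `(Ω,G)` is factorizable. -/
def Factorizable (A : GAct Ω G) : Prop :=
  ∀ N : ℕ, ∃ Cf : ∀ i : Fin (n + 1), (MFi Ω i → Fin N) → ℝ,
    (∀ i β, 0 < Cf i β) ∧
    (∀ (g : G) (i : Fin (n + 1)) (β : MFi Ω i → Fin N),
      Cf (A.act g i) (A.shift g i β) = Cf i β) ∧
    ∀ α : MultiFacet Ω → Fin N,
      (∏ i : Fin (n + 1), Cf i (restr α i)) =
        ((Fintype.card {γ : MultiFacet Ω → Fin N //
          ∃ gs : Fin (n + 1) → G, ∀ i : Fin (n + 1), A.act (gs i) i = i ∧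
            ∀ F : MFi Ω i, γ (A.actF (gs i)⁻¹ F.1) = α F.1} : ℕ) : ℝ)⁻¹

/-! ### Two-block (single edge `Λ₁`) ranks -/

/-- The single-edge rank of a two-block polynomial. -/
def rank1 {mv : ℕ} (p : MvPolynomial (Fin mv ⊕ Fin mv) ℝ) : ℕ∞ :=
  ⨅ r : {r : ℕ // ∃ f g : Fin r → MvPolynomial (Fin mv) ℝ,
    p = ∑ α : Fin r, rename Sum.inl (f α) * rename Sum.inr (g α)}, (r.1 : ℕ∞)

/-- The single-edge separable rank (w.r.t. the local sos cones). -/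
def sep1 {mv : ℕ} (p : MvPolynomial (Fin mv ⊕ Fin mv) ℝ) : ℕ∞ :=
  ⨅ r : {r : ℕ // ∃ f g : Fin r → MvPolynomial (Fin mv) ℝ,
    (∀ α, IsSos (f α) ∧ IsSos (g α)) ∧
    p = ∑ α : Fin r, rename Sum.inl (f α) * rename Sum.inr (g α)}, (r.1 : ℕ∞)

/-- The single-edge sos rank. -/
def sos1 {mv : ℕ} (p : MvPolynomial (Fin mv ⊕ Fin mv) ℝ) : ℕ∞ :=
  ⨅ r : {r : ℕ // ∃ (s₀ s₁ : ℕ) (a : Fin s₀ → Fin r → MvPolynomial (Fin mv) ℝ)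
    (b : Fin s₁ → Fin r → MvPolynomial (Fin mv) ℝ),
    p = ∑ k : Fin s₀, ∑ l : Fin s₁,
      (∑ α : Fin r, rename Sum.inl (a k α) * rename Sum.inr (b l α)) ^ 2}, (r.1 : ℕ∞)

/-- The Euclidean-distance-matrix polynomial `p_m = ∑ (i-j)² xᵢ² yⱼ²`. -/
def pm (mv : ℕ) : MvPolynomial (Fin mv ⊕ Fin mv) ℝ :=
  ∑ i : Fin mv, ∑ j : Fin mv,
    MvPolynomial.C (((i : ℕ) : ℝ) - ((j : ℕ) : ℝ)) ^ 2 *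
      (X (Sum.inl i) ^ 2 * X (Sum.inr j) ^ 2)


/-- Constant block sizes are trivially compatible with any group action. -/
theorem constCompat {n : ℕ} {Ω : Finset (Fin (n + 1)) → ℕ} {G : Type} [Group G]
    (A : GAct Ω G) (mv : ℕ) :
    ∀ (g : G) (i : Fin (n + 1)),
      (fun _ : Fin (n + 1) => mv) (A.act g i) = (fun _ : Fin (n + 1) => mv) i :=
  fun _ _ => rfl
section Statement9Aux

variable {n mv d : ℕ}

/-- The variable index type with `n+1` blocks of `mv` variables. -/
abbrev Blk (n mv : ℕ) : Type := Σ _ : Fin (n + 1), Fin mv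

/-- The exponent (as a finitely supported function) of the product monomial indexed by `k`. -/
def expo (k : Fin (n + 1) → Mon mv d) : Blk n mv →₀ ℕ :=
  Finsupp.equivFunOnFinite.symm fun v => ((k v.1).1 v.2 : ℕ)

@[simp] lemma expo_apply (k : Fin (n + 1) → Mon mv d) (v : Blk n mv) :
    expo k v = ((k v.1).1 v.2 : ℕ) := rfl

lemma expo_injective : Function.Injective (expo (n := n) (mv := mv) (d := d)) := by
  intro k k' h
  funext i
  apply Subtype.ext
  funext j
  have := DFunLike.congr_fun h (⟨i, j⟩ : Blk n mv)
  simpa [Fin.val_inj] using this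

/-- Reconstructing `k` from a bounded exponent vector. -/
def kOf (u : Blk n mv →₀ ℕ) (hu : ∀ i, (∑ j : Fin mv, u ⟨i, j⟩) ≤ d) :
    Fin (n + 1) → Mon mv d := fun i =>
  ⟨fun j => ⟨u ⟨i, j⟩, Nat.lt_succ_of_le
      ((Finset.single_le_sum (f := fun j => u ⟨i, j⟩)
        (fun _ _ => Nat.zero_le _) (Finset.mem_univ j)).trans (hu i))⟩,
   by simpa using hu i⟩

lemma expo_kOf (u : Blk n mv →₀ ℕ) (hu : ∀ i, (∑ j : Fin mv, u ⟨i, j⟩) ≤ d) :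
    expo (kOf u hu) = u := by
  ext v
  rcases v with ⟨i, j⟩
  simp [kOf]

lemma monomial_eq_prodX (u : Blk n mv →₀ ℕ) :
    (monomial u (1 : ℝ) : PSpace (fun _ : Fin (n + 1) => mv)) = ∏ v : Blk n mv, X v ^ u v := by
  rw [monomial_eq, C_1, one_mul, Finsupp.prod_fintype]
  intro v; exact pow_zero _

section GroupAct

variable {G : Type} [Group G]

/-- The variable permutation induced by `g`. -/
def pmap (act : G →* Equiv.Perm (Fin (n + 1))) (g : G) : Blk n mv → Blk n mv :=
  fun v => ⟨act g v.1, v.2⟩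

/-- The action of `g` on index families. -/
def pact (act : G →* Equiv.Perm (Fin (n + 1))) (g : G) (k : Fin (n + 1) → Mon mv d) :
    Fin (n + 1) → Mon mv d := fun i => k (act g⁻¹ i)

lemma pact_pact (act : G →* Equiv.Perm (Fin (n + 1))) (g h : G)
    (k : Fin (n + 1) → Mon mv d) : pact act g (pact act h k) = pact act (g * h) k := by
  funext i
  simp [pact, mul_inv_rev, map_mul, Equiv.Perm.mul_apply]

lemma pact_one (act : G →* Equiv.Perm (Fin (n + 1))) (k : Fin (n + 1) → Mon mv d) :
    pact act (1 : G) k = k := by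
  funext i; simp [pact]

/-- The action of `g` on index families, as an equivalence. -/
def pactEquiv (act : G →* Equiv.Perm (Fin (n + 1))) (g : G) :
    (Fin (n + 1) → Mon mv d) ≃ (Fin (n + 1) → Mon mv d) where
  toFun := pact act g
  invFun := pact act g⁻¹
  left_inv k := by rw [pact_pact, inv_mul_cancel, pact_one]
  right_inv k := by rw [pact_pact, mul_inv_cancel, pact_one]

lemma pmap_leftinv (act : G →* Equiv.Perm (Fin (n + 1))) (g : G) (v : Blk n mv) :
    pmap act g⁻¹ (pmap act g v) = v := by
  rcases v with ⟨i, j⟩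
  simp [pmap]

lemma pmap_injective (act : G →* Equiv.Perm (Fin (n + 1))) (g : G) :
    Function.Injective (pmap (mv := mv) act g) :=
  Function.LeftInverse.injective (pmap_leftinv act g)

lemma rename_expo (act : G →* Equiv.Perm (Fin (n + 1))) (g : G)
    (k : Fin (n + 1) → Mon mv d) (r : ℝ) :
    rename (pmap act g) (monomial (expo k) r)
      = monomial (expo (pact act g k)) r := by
  rw [rename_monomial]
  have hmd : Finsupp.mapDomain (pmap act g) (expo k) = expo (pact act g k) := by
    refine Finsupp.ext fun v => ?_
    rcases v with ⟨i, j⟩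
    have hv : (⟨i, j⟩ : Blk n mv) = pmap act g ⟨act g⁻¹ i, j⟩ := by
      simp [pmap]
    rw [hv, Finsupp.mapDomain_apply (pmap_injective act g)]
    simp [pact, pmap, map_inv]
  rw [hmd]

end GroupAct

/-! #### Degree reduction -/

/-- The local degree of an exponent vector at site `i`. -/
def wI (i : Fin (n + 1)) (u : Blk n mv →₀ ℕ) : ℕ := ∑ j : Fin mv, u ⟨i, j⟩

/-- Substitution `x⁽ⁱ⁾ ↦ T·x⁽ⁱ⁾` collecting the local degree at site `i`. -/
def phiB (i : Fin (n + 1)) :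
    PSpace (fun _ : Fin (n + 1) => mv) →ₐ[ℝ] Polynomial (PSpace (fun _ : Fin (n + 1) => mv)) :=
  aeval fun v : Blk n mv => Polynomial.C (X v) * (if v.1 = i then Polynomial.X else 1)

lemma phiB_monomial (i : Fin (n + 1)) (u : Blk n mv →₀ ℕ) (r : ℝ) :
    phiB i (monomial u r) = Polynomial.C (monomial u r) * Polynomial.X ^ wI i u := by
  rw [phiB, aeval_monomial, Finsupp.prod_fintype _ _ (fun v => pow_zero _)]
  have h1 : ∀ v : Blk n mv,
      (Polynomial.C (X v : PSpace (fun _ : Fin (n + 1) => mv))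
        * (if v.1 = i then Polynomial.X else 1)) ^ u v
      = Polynomial.C ((X v : PSpace (fun _ : Fin (n + 1) => mv)) ^ u v)
        * Polynomial.X ^ (if v.1 = i then u v else 0) := by
    intro v
    by_cases hv : v.1 = i <;> simp [hv, mul_pow, ← map_pow]
  simp_rw [h1]
  rw [Finset.prod_mul_distrib, ← map_prod, Finset.prod_pow_eq_pow_sum]
  have h2 : (∑ v : Blk n mv, if v.1 = i then u v else 0) = wI i u := by
    rw [← Finset.univ_sigma_univ, Finset.sum_sigma]
    · calc (∑ i' : Fin (n + 1), ∑ j : Fin mv, if i' = i then u ⟨i', j⟩ else 0)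
          = ∑ i' : Fin (n + 1), if i' = i then (∑ j : Fin mv, u ⟨i', j⟩) else 0 := by
            refine Finset.sum_congr rfl fun i' _ => ?_
            by_cases h : i' = i <;> simp [h]
        _ = wI i u := by rw [Finset.sum_ite_eq' Finset.univ i]; simp [wI]
  rw [h2, ← monomial_eq_prodX]
  have h3 : (algebraMap ℝ (Polynomial (PSpace (fun _ : Fin (n + 1) => mv)))) r
      = Polynomial.C (C r) := by
    rw [Polynomial.algebraMap_apply, MvPolynomial.algebraMap_eq]
  rw [h3, ← mul_assoc, ← map_mul, C_mul_monomial, mul_one]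

lemma phiB_apply (i : Fin (n + 1)) (f : PSpace (fun _ : Fin (n + 1) => mv)) :
    phiB i f = ∑ u ∈ f.support,
      Polynomial.C (monomial u (f.coeff u)) * Polynomial.X ^ wI i u := by
  conv_lhs => rw [f.as_sum, map_sum]
  exact Finset.sum_congr rfl fun u _ => phiB_monomial i u _

lemma natDegree_phiB_le (i : Fin (n + 1)) (f : PSpace (fun _ : Fin (n + 1) => mv)) (D : ℕ)
    (hf : ∀ u ∈ f.support, wI i u ≤ D) : (phiB i f).natDegree ≤ D := by
  rw [phiB_apply]
  apply Polynomial.natDegree_sum_le_of_forall_le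
  intro u hu
  refine (Polynomial.natDegree_C_mul_le _ _).trans ?_
  simpa [Polynomial.natDegree_X_pow] using hf u hu

lemma wI_le_natDegree_phiB (i : Fin (n + 1)) (f : PSpace (fun _ : Fin (n + 1) => mv))
    (u : Blk n mv →₀ ℕ) (hu : u ∈ f.support) : wI i u ≤ (phiB i f).natDegree := by
  by_contra hlt
  push_neg at hlt
  have h0 : (phiB i f).coeff (wI i u) = 0 := Polynomial.coeff_eq_zero_of_natDegree_lt hlt
  have hval : MvPolynomial.coeff u ((phiB i f).coeff (wI i u)) = f.coeff u := by
    rw [phiB_apply, Polynomial.finset_sum_coeff]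
    simp_rw [Polynomial.coeff_C_mul, Polynomial.coeff_X_pow, mul_ite, mul_one, mul_zero]
    rw [MvPolynomial.coeff_sum (f.support) _ u, Finset.sum_eq_single u]
    · simp [MvPolynomial.coeff_monomial]
    · intro u' _ hne
      rw [apply_ite (MvPolynomial.coeff u), MvPolynomial.coeff_monomial, if_neg hne,
        MvPolynomial.coeff_zero, ite_self]
    · intro h'; exact absurd hu h'
  rw [h0] at hval
  simp only [MvPolynomial.coeff_zero] at hval
  exact (MvPolynomial.mem_support_iff.mp hu) hval.symm

lemma sumsq_eq_zero {σ' : Type*} {ι : Type*} (s : Finset ι)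
    (F : ι → MvPolynomial σ' ℝ) (h : ∑ t ∈ s, F t ^ 2 = 0) : ∀ t ∈ s, F t = 0 := by
  intro t ht
  have key : ∀ x : σ' → ℝ, eval x (F t) = 0 := by
    intro x
    have h' : ∑ t ∈ s, (eval x (F t)) ^ 2 = 0 := by
      have := congrArg (eval x) h
      simpa [map_sum] using this
    have h2 := (Finset.sum_eq_zero_iff_of_nonneg (fun t _ => sq_nonneg _)).mp h' t ht
    exact pow_eq_zero_iff (by norm_num : (2 : ℕ) ≠ 0) |>.mp h2
  exact MvPolynomial.funext (fun x => by simp [key x])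

lemma natDegree_le_of_sumsq {σ' : Type*} {N dd : ℕ}
    (F : Fin N → Polynomial (MvPolynomial σ' ℝ))
    (h : (∑ t, F t ^ 2).natDegree ≤ 2 * dd) (t : Fin N) : (F t).natDegree ≤ dd := by
  by_contra hc
  push_neg at hc
  set D := Finset.univ.sup fun s => (F s).natDegree with hD
  have hDt : (F t).natDegree ≤ D :=
    Finset.le_sup (f := fun s => (F s).natDegree) (Finset.mem_univ t)
  have hdD : dd < D := lt_of_lt_of_le hc hDt
  obtain ⟨t₀, -, ht₀⟩ := Finset.exists_mem_eq_sup Finset.univ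
    ⟨t, Finset.mem_univ t⟩ (fun s => (F s).natDegree)
  have hF0 : F t₀ ≠ 0 := by
    intro h0
    rw [← hD, h0, Polynomial.natDegree_zero] at ht₀
    omega
  have hcoeff : ∀ s : Fin N, (F s ^ 2).coeff (2 * D) = (F s).coeff D ^ 2 := by
    intro s
    have hle : (F s).natDegree ≤ D :=
      Finset.le_sup (f := fun s => (F s).natDegree) (Finset.mem_univ s)
    rcases lt_or_eq_of_le hle with hlt2 | heq
    · have h1 : ((F s) ^ 2).natDegree < 2 * D :=
        lt_of_le_of_lt Polynomial.natDegree_pow_le (by omega)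
      rw [Polynomial.coeff_eq_zero_of_natDegree_lt h1,
          Polynomial.coeff_eq_zero_of_natDegree_lt hlt2]
      ring
    · have hl : (F s).leadingCoeff = (F s).coeff D := by
        rw [← heq]; exact (Polynomial.coeff_natDegree).symm
      rw [pow_two, two_mul, ← heq, Polynomial.coeff_mul_degree_add_degree, heq, hl, pow_two]
  have hne : (∑ s, F s ^ 2).coeff (2 * D) ≠ 0 := by
    rw [Polynomial.finset_sum_coeff]
    simp_rw [hcoeff]
    intro hzero
    have hz := sumsq_eq_zero Finset.univ (fun s => (F s).coeff D) hzero t₀ (Finset.mem_univ t₀)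
    have hlz : (F t₀).leadingCoeff = 0 := by
      rw [Polynomial.leadingCoeff, ← ht₀, ← hD]; exact hz
    exact Polynomial.leadingCoeff_ne_zero.mpr hF0 hlz
  have h2D : 2 * D ≤ 2 * dd := le_trans (Polynomial.le_natDegree_of_ne_zero hne) h
  omega

/-- Degree reduction: in a sos decomposition of a polynomial of local degree `≤ 2d`, each
summand has local degree `≤ d`. -/
lemma degree_reduction {N : ℕ} (f : Fin N → PSpace (fun _ : Fin (n + 1) => mv))
    (hp : locDegLE (fun _ : Fin (n + 1) => mv) (∑ t, f t ^ 2) (2 * d))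
    (t : Fin N) (u : Blk n mv →₀ ℕ) (hu : u ∈ (f t).support) (i : Fin (n + 1)) :
    wI i u ≤ d := by
  refine le_trans (wI_le_natDegree_phiB i (f t) u hu) ?_
  refine natDegree_le_of_sumsq (fun s => phiB i (f s)) ?_ t
  have hsum : (∑ s, (phiB i (f s)) ^ 2) = phiB i (∑ s, f s ^ 2) := by
    rw [map_sum]
    exact Finset.sum_congr rfl fun s _ => (map_pow _ _ _).symm
  rw [hsum]
  exact natDegree_phiB_le i _ (2 * d) (fun u hu => hp u hu i)

/-- Expansion of a locally-degree-bounded polynomial in the product monomial basis. -/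
lemma expand_basis (f : PSpace (fun _ : Fin (n + 1) => mv))
    (hf : ∀ u ∈ f.support, ∀ i, wI i u ≤ d) :
    f = ∑ k : Fin (n + 1) → Mon mv d, monomial (expo k) (f.coeff (expo k)) := by
  ext u
  simp only [MvPolynomial.coeff_sum]
  by_cases hu : u ∈ f.support
  · have hub : ∀ i, (∑ j : Fin mv, u ⟨i, j⟩) ≤ d := fun i => hf u hu i
    rw [Finset.sum_eq_single (kOf u hub)]
    · rw [expo_kOf, MvPolynomial.coeff_monomial, if_pos rfl]
    · intro k _ hne
      rw [MvPolynomial.coeff_monomial, if_neg]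
      intro heq
      exact hne (expo_injective (by rw [heq, expo_kOf]))
    · intro h'; exact absurd (Finset.mem_univ _) h'
  · have hcu : f.coeff u = 0 := of_not_not fun h => hu (MvPolynomial.mem_support_iff.mpr h)
    rw [hcu]
    refine (Finset.sum_eq_zero fun k _ => ?_).symm
    rw [MvPolynomial.coeff_monomial]
    split
    · next heq => rw [heq, hcu]
    · rfl

open scoped MatrixOrder in
/-- The psd square root (via the continuous functional calculus). -/
def _root_.Matrix.PosSemidef.sqrt {S : Type} [Fintype S] [DecidableEq S] {M : Matrix S S ℝ}
    (_hM : M.PosSemidef) : Matrix S S ℝ :=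
  CFC.sqrt M

open scoped MatrixOrder in
lemma _root_.Matrix.PosSemidef.posSemidef_sqrt {S : Type} [Fintype S] [DecidableEq S]
    {M : Matrix S S ℝ} (hM : M.PosSemidef) : hM.sqrt.PosSemidef :=
  Matrix.nonneg_iff_posSemidef.mp (CFC.sqrt_nonneg M)

open scoped MatrixOrder in
lemma _root_.Matrix.PosSemidef.sq_sqrt {S : Type} [Fintype S] [DecidableEq S]
    {M : Matrix S S ℝ} (hM : M.PosSemidef) : hM.sqrt ^ 2 = M :=
  CFC.sq_sqrt M hM.nonneg

open scoped MatrixOrder in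
lemma _root_.Matrix.PosSemidef.sqrt_mul_self {S : Type} [Fintype S] [DecidableEq S]
    {M : Matrix S S ℝ} (hM : M.PosSemidef) : hM.sqrt * hM.sqrt = M :=
  CFC.sqrt_mul_sqrt_self M hM.nonneg

open scoped MatrixOrder in
lemma _root_.Matrix.PosSemidef.eq_sqrt_of_sq_eq {S : Type} [Fintype S] [DecidableEq S]
    {A B : Matrix S S ℝ} (hA : A.PosSemidef) (hB : B.PosSemidef) (hAB : A ^ 2 = B) :
    A = hB.sqrt :=
  (CFC.sqrt_unique (a := B) (b := A) (by simpa [pow_two] using hAB) hA.nonneg).symm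

/-- The unique psd square root of an invariant psd matrix is invariant. -/
lemma sqrt_invariant {S : Type} [Fintype S] [DecidableEq S] {M : Matrix S S ℝ}
    (hM : M.PosSemidef) (e : S ≃ S) (hMe : ∀ k k', M (e k) (e k') = M k k') :
    ∀ k k', hM.sqrt (e k) (e k') = hM.sqrt k k' := by
  have h1 : (hM.sqrt.submatrix e e).PosSemidef := hM.posSemidef_sqrt.submatrix e
  have h2 : (hM.sqrt.submatrix e e) ^ 2 = M := by
    rw [pow_two, Matrix.submatrix_mul_equiv, ← pow_two, hM.sq_sqrt]
    ext k k'
    exact hMe k k'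
  have h3 := h1.eq_sqrt_of_sq_eq hM h2
  intro k k'
  exact congrFun (congrFun h3 k) k'

/-- Product of embedded local monomials (with a scalar at site `0`). -/
lemma prod_emb_localmon {n mv d : ℕ} (k' : Fin (n + 1) → Mon mv d) (r : ℝ) :
    (∏ i : Fin (n + 1), rename (fun t : Fin mv => (⟨i, t⟩ : Blk n mv))
      ((if i = (0 : Fin (n + 1)) then C r else 1)
        * ∏ jj : Fin mv, (X jj : MvPolynomial (Fin mv) ℝ) ^ ((k' i).1 jj : ℕ)))
    = (monomial (expo k') r : PSpace (fun _ : Fin (n + 1) => mv)) := by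
  have h1 : ∀ i : Fin (n + 1), rename (fun t : Fin mv => (⟨i, t⟩ : Blk n mv))
      ((if i = (0 : Fin (n + 1)) then C r else 1)
        * ∏ jj : Fin mv, (X jj : MvPolynomial (Fin mv) ℝ) ^ ((k' i).1 jj : ℕ))
      = (if i = (0 : Fin (n + 1)) then C r else 1)
        * ∏ jj : Fin mv, (X (⟨i, jj⟩ : Blk n mv) : PSpace (fun _ : Fin (n + 1) => mv))
            ^ ((k' i).1 jj : ℕ) := by
    intro i
    rw [map_mul]
    congr 1
    · split <;> simp
    · rw [map_prod]
      exact Finset.prod_congr rfl fun jj _ => by rw [map_pow, rename_X]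
  simp_rw [h1]
  rw [Finset.prod_mul_distrib]
  have h2 : (∏ i : Fin (n + 1), if i = (0 : Fin (n + 1)) then (C r : PSpace (fun _ : Fin (n + 1) => mv)) else 1) = C r := by
    rw [Finset.prod_ite_eq' Finset.univ (0 : Fin (n + 1))
      (fun _ => (C r : PSpace (fun _ : Fin (n + 1) => mv)))]
    simp
  have h3 : (∏ i : Fin (n + 1), ∏ jj : Fin mv,
      (X (⟨i, jj⟩ : Blk n mv) : PSpace (fun _ : Fin (n + 1) => mv)) ^ ((k' i).1 jj : ℕ))
      = monomial (expo k') (1 : ℝ) := by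
    rw [monomial_eq_prodX, ← Finset.univ_sigma_univ, Finset.prod_sigma]
    rfl
  rw [h2, h3, C_mul_monomial, mul_one]

end Statement9Aux

/-- every `G`-invariant sos polynomial has a `G`-invariant sos family, whose
members decompose with local factors at site `i` depending only on `kᵢ`. -/
theorem statement9 {n mv d : ℕ} {G : Type} [Group G] [Fintype G]
    (act : G →* Equiv.Perm (Fin (n + 1)))
    (p : PSpace (fun _ : Fin (n + 1) => mv))
    (hinv : ∀ g : G,
      rename (fun v : Σ _ : Fin (n + 1), Fin mv =>
        (⟨act g v.1, v.2⟩ : Σ _ : Fin (n + 1), Fin mv)) p = p)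
    (hsos : IsSos p)
    (hdeg : locDegLE (fun _ : Fin (n + 1) => mv) p (2 * d)) :
    ∃ q : (Fin (n + 1) → Mon mv d) → PSpace (fun _ : Fin (n + 1) => mv),
      (∀ (g : G) (k : Fin (n + 1) → Mon mv d),
        q (fun i => k (act g⁻¹ i)) =
          rename (fun v : Σ _ : Fin (n + 1), Fin mv =>
            (⟨act g v.1, v.2⟩ : Σ _ : Fin (n + 1), Fin mv)) (q k)) ∧
      (p = ∑ k : Fin (n + 1) → Mon mv d, q k ^ 2) ∧
      ∃ (r : ℕ) (ql : ∀ _ : Fin (n + 1), Mon mv d → Fin r → MvPolynomial (Fin mv) ℝ),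
        ∀ k : Fin (n + 1) → Mon mv d,
          q k = ∑ j : Fin r, ∏ i : Fin (n + 1),
            rename (fun t : Fin mv => (⟨i, t⟩ : Σ _ : Fin (n + 1), Fin mv))
              (ql i (k i) j) := by
  classical
  obtain ⟨N, f, hpf⟩ := hsos
  have hdeg' : ∀ t, ∀ u ∈ (f t).support, ∀ i, wI i u ≤ d := by
    intro t u hu i
    exact degree_reduction f (by rw [← hpf]; exact hdeg) t u hu i
  set c : Fin N → (Fin (n + 1) → Mon mv d) → ℝ := fun t k => (f t).coeff (expo k) with hc
  have hft : ∀ t, f t = ∑ k : Fin (n + 1) → Mon mv d, monomial (expo k) (c t k) :=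
    fun t => expand_basis (f t) (hdeg' t)
  set cG : ℝ := (Fintype.card G : ℝ) with hcGdef
  have hcG : 0 < cG := by
    rw [hcGdef]
    exact_mod_cast Fintype.card_pos
  have hs : Real.sqrt cG⁻¹ * Real.sqrt cG⁻¹ = cG⁻¹ :=
    Real.mul_self_sqrt (inv_nonneg.2 hcG.le)
  set B : Matrix (G × Fin N) (Fin (n + 1) → Mon mv d) ℝ :=
    Matrix.of fun gt k => Real.sqrt cG⁻¹ * c gt.2 (pact act gt.1⁻¹ k) with hB
  set M : Matrix (Fin (n + 1) → Mon mv d) (Fin (n + 1) → Mon mv d) ℝ := B.conjTranspose * B with hMdef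
  have hM : M.PosSemidef := Matrix.posSemidef_conjTranspose_mul_self B
  have hMapp : ∀ k k', M k k' = ∑ gt : G × Fin N,
      cG⁻¹ * (c gt.2 (pact act gt.1⁻¹ k) * c gt.2 (pact act gt.1⁻¹ k')) := by
    intro k k'
    rw [hMdef, Matrix.mul_apply]
    refine Finset.sum_congr rfl fun gt _ => ?_
    simp only [Matrix.conjTranspose_apply, hB, Matrix.of_apply, star_trivial]
    rw [mul_mul_mul_comm, hs]
  have hMinv : ∀ (h : G) (k k' : Fin (n + 1) → Mon mv d),
      M (pact act h k) (pact act h k') = M k k' := by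
    intro h k k'
    rw [hMapp, hMapp]
    refine Fintype.sum_equiv (Equiv.prodCongr (Equiv.mulLeft h⁻¹) (Equiv.refl (Fin N))) _ _ ?_
    intro gt
    have hg : ∀ kk : Fin (n + 1) → Mon mv d,
        pact act gt.1⁻¹ (pact act h kk) = pact act ((h⁻¹ * gt.1)⁻¹) kk := by
      intro kk
      rw [pact_pact]
      congr 1
      group
    simp only [Equiv.prodCongr_apply, Equiv.coe_mulLeft, Equiv.refl_apply, Prod.map]
    rw [hg k, hg k']
  set R := hM.sqrt with hRdef
  have hRsymm : ∀ k k', R k' k = R k k' := by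
    intro k k'
    have hh := hM.posSemidef_sqrt.1
    simpa [Matrix.conjTranspose_apply] using congrFun (congrFun hh k) k'
  have hRinv : ∀ (g : G) (k k' : Fin (n + 1) → Mon mv d),
      R (pact act g k) (pact act g k') = R k k' :=
    fun g => sqrt_invariant hM (pactEquiv act g) (hMinv g)
  have hRinv' : ∀ (g : G) (k k' : Fin (n + 1) → Mon mv d),
      R (pact act g k) k' = R k (pact act g⁻¹ k') := by
    intro g k k'
    have h0 := hRinv g k (pact act g⁻¹ k')
    rwa [pact_pact, mul_inv_cancel, pact_one] at h0
  have hRR : ∀ k' k'', (∑ k : Fin (n + 1) → Mon mv d, R k k' * R k k'') = M k' k'' := by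
    intro k' k''
    calc (∑ k : Fin (n + 1) → Mon mv d, R k k' * R k k'')
        = ∑ k : Fin (n + 1) → Mon mv d, R k' k * R k k'' :=
          Finset.sum_congr rfl fun k _ => by rw [hRsymm k k']
      _ = (R * R) k' k'' := (Matrix.mul_apply).symm
      _ = M k' k'' := by rw [hRdef, hM.sqrt_mul_self]
  -- the equivariant family
  set q : (Fin (n + 1) → Mon mv d) → PSpace (fun _ : Fin (n + 1) => mv) :=
    fun k => ∑ k' : Fin (n + 1) → Mon mv d, monomial (expo k') (R k k') with hq
  -- (a) equivariance
  have ha : ∀ (g : G) (k : Fin (n + 1) → Mon mv d),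
      q (pact act g k) = rename (pmap act g) (q k) := by
    intro g k
    simp only [hq]
    rw [map_sum]
    refine Fintype.sum_equiv (pactEquiv act g⁻¹) _ _ ?_
    intro k'
    have h1 : (pactEquiv act g⁻¹) k' = pact act g⁻¹ k' := rfl
    rw [h1, rename_expo act g (pact act g⁻¹ k'), pact_pact, mul_inv_cancel, pact_one,
      hRinv' g k k']
  -- auxiliary: rename of f t
  have hrf : ∀ (g : G) (t : Fin N), rename (pmap act g) (f t)
      = ∑ k' : Fin (n + 1) → Mon mv d, monomial (expo k') (c t (pact act g⁻¹ k')) := by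
    intro g t
    conv_lhs => rw [hft t, map_sum]
    refine Fintype.sum_equiv (pactEquiv act g) _ _ ?_
    intro k'
    have h1 : (pactEquiv act g) k' = pact act g k' := rfl
    rw [h1, rename_expo act g k' (c t k'), pact_pact, inv_mul_cancel, pact_one]
  -- (b) sum of squares
  have hb : (∑ k : Fin (n + 1) → Mon mv d, q k ^ 2) = p := by
    have step1 : (∑ k : Fin (n + 1) → Mon mv d, q k ^ 2)
        = ∑ k' : Fin (n + 1) → Mon mv d, ∑ k'' : Fin (n + 1) → Mon mv d,
            monomial (expo k' + expo k'') (M k' k'') := by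
      have hsq : ∀ k : Fin (n + 1) → Mon mv d, q k ^ 2
          = ∑ k' : Fin (n + 1) → Mon mv d, ∑ k'' : Fin (n + 1) → Mon mv d,
              monomial (expo k' + expo k'') (R k k' * R k k'') := by
        intro k
        rw [hq, pow_two, Finset.sum_mul_sum]
        exact Finset.sum_congr rfl fun k' _ => Finset.sum_congr rfl fun k'' _ => by
          rw [monomial_mul]
      simp_rw [hsq]
      rw [Finset.sum_comm]
      refine Finset.sum_congr rfl fun k' _ => ?_
      rw [Finset.sum_comm]
      refine Finset.sum_congr rfl fun k'' _ => ?_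
      rw [← hRR k' k'', map_sum (monomial (expo k' + expo k''))]
    have step2 : (∑ k' : Fin (n + 1) → Mon mv d, ∑ k'' : Fin (n + 1) → Mon mv d,
            monomial (expo k' + expo k'') (M k' k''))
        = ∑ gt : G × Fin N, cG⁻¹ • (rename (pmap act gt.1) (f gt.2)) ^ 2 := by
      have e1 : ∀ (k' k'' : Fin (n + 1) → Mon mv d),
          (monomial (expo k' + expo k'') (M k' k'') : PSpace (fun _ : Fin (n + 1) => mv))
          = ∑ gt : G × Fin N, cG⁻¹ • monomial (expo k' + expo k'')
              (c gt.2 (pact act gt.1⁻¹ k') * c gt.2 (pact act gt.1⁻¹ k'')) := by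
        intro k' k''
        rw [hMapp, map_sum (monomial (expo k' + expo k''))]
        exact Finset.sum_congr rfl fun gt _ => by rw [smul_monomial, smul_eq_mul]
      simp_rw [e1]
      have swap : (∑ k' : Fin (n + 1) → Mon mv d, ∑ k'' : Fin (n + 1) → Mon mv d,
            ∑ gt : G × Fin N, cG⁻¹ • monomial (expo k' + expo k'')
              (c gt.2 (pact act gt.1⁻¹ k') * c gt.2 (pact act gt.1⁻¹ k'')))
          = ∑ gt : G × Fin N, ∑ k' : Fin (n + 1) → Mon mv d,
              ∑ k'' : Fin (n + 1) → Mon mv d, cG⁻¹ • monomial (expo k' + expo k'')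
                (c gt.2 (pact act gt.1⁻¹ k') * c gt.2 (pact act gt.1⁻¹ k'')) :=
        calc (∑ k' : Fin (n + 1) → Mon mv d, ∑ k'' : Fin (n + 1) → Mon mv d,
            ∑ gt : G × Fin N, cG⁻¹ • monomial (expo k' + expo k'')
              (c gt.2 (pact act gt.1⁻¹ k') * c gt.2 (pact act gt.1⁻¹ k'')))
            = ∑ k' : Fin (n + 1) → Mon mv d, ∑ gt : G × Fin N,
                ∑ k'' : Fin (n + 1) → Mon mv d, cG⁻¹ • monomial (expo k' + expo k'')
                  (c gt.2 (pact act gt.1⁻¹ k') * c gt.2 (pact act gt.1⁻¹ k'')) :=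
              Finset.sum_congr rfl fun k' _ => Finset.sum_comm
          _ = _ := Finset.sum_comm
      rw [swap]
      refine Finset.sum_congr rfl fun gt _ => ?_
      rw [pow_two, hrf gt.1 gt.2, Finset.sum_mul_sum, Finset.smul_sum]
      refine Finset.sum_congr rfl fun k'' _ => ?_
      rw [Finset.smul_sum]
      refine Finset.sum_congr rfl fun k' _ => ?_
      rw [monomial_mul]
    have step3 : (∑ gt : G × Fin N, cG⁻¹ • (rename (pmap act gt.1) (f gt.2)) ^ 2) = p := by
      rw [Fintype.sum_prod_type]
      have e2 : ∀ g : G, (∑ t : Fin N, cG⁻¹ • (rename (pmap act g) (f t)) ^ 2)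
          = cG⁻¹ • p := by
        intro g
        rw [← Finset.smul_sum]
        congr 1
        have : (∑ t : Fin N, (rename (pmap act g) (f t)) ^ 2)
            = rename (pmap act g) (∑ t : Fin N, f t ^ 2) := by
          rw [map_sum]
          exact Finset.sum_congr rfl fun t _ => (map_pow _ _ _).symm
        rw [this, ← hpf]
        exact hinv g
      simp_rw [e2]
      rw [Finset.sum_const, Finset.card_univ, ← Nat.cast_smul_eq_nsmul ℝ, smul_smul,
        ← hcGdef, mul_inv_cancel₀ (ne_of_gt hcG), one_smul]
    rw [step1, step2, step3]
  -- (c) the factorization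
  set SS := ((Fin (n + 1) → Mon mv d) × (Fin (n + 1) → Mon mv d)) with hSS
  set e : Fin (Fintype.card SS) ≃ SS := (Fintype.equivFin SS).symm with he
  set ql : ∀ _ : Fin (n + 1), Mon mv d → Fin (Fintype.card SS) → MvPolynomial (Fin mv) ℝ :=
    fun i κ j => if κ = (e j).1 i then
      (if i = (0 : Fin (n + 1)) then C (R (e j).1 (e j).2) else 1)
        * ∏ jj : Fin mv, (X jj : MvPolynomial (Fin mv) ℝ) ^ (((e j).2 i).1 jj : ℕ)
    else 0 with hql
  have hcfact : ∀ k : Fin (n + 1) → Mon mv d,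
      q k = ∑ j : Fin (Fintype.card SS), ∏ i : Fin (n + 1),
        rename (fun t : Fin mv => (⟨i, t⟩ : Blk n mv)) (ql i (k i) j) := by
    intro k
    have hG : ∀ ab : SS, (∏ i : Fin (n + 1),
        rename (fun t : Fin mv => (⟨i, t⟩ : Blk n mv))
          (if k i = ab.1 i then
            (if i = (0 : Fin (n + 1)) then C (R ab.1 ab.2) else 1)
              * ∏ jj : Fin mv, (X jj : MvPolynomial (Fin mv) ℝ) ^ ((ab.2 i).1 jj : ℕ)
          else 0))
        = if k = ab.1 then (monomial (expo ab.2) (R ab.1 ab.2)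
            : PSpace (fun _ : Fin (n + 1) => mv)) else 0 := by
      intro ab
      by_cases hk : k = ab.1
      · rw [if_pos hk]
        subst hk
        simp only [if_pos rfl]
        exact prod_emb_localmon ab.2 (R ab.1 ab.2)
      · rw [if_neg hk]
        obtain ⟨i₀, hi₀⟩ := Function.ne_iff.mp hk
        refine Finset.prod_eq_zero (Finset.mem_univ i₀) ?_
        rw [if_neg hi₀, map_zero]
    have hsum : (∑ j : Fin (Fintype.card SS), ∏ i : Fin (n + 1),
        rename (fun t : Fin mv => (⟨i, t⟩ : Blk n mv)) (ql i (k i) j))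
        = ∑ ab : SS, if k = ab.1 then (monomial (expo ab.2) (R ab.1 ab.2)
            : PSpace (fun _ : Fin (n + 1) => mv)) else 0 := by
      rw [← Equiv.sum_comp e (fun ab : SS => if k = ab.1 then
        (monomial (expo ab.2) (R ab.1 ab.2) : PSpace (fun _ : Fin (n + 1) => mv)) else 0)]
      refine Fintype.sum_congr _ _ fun j => ?_
      rw [← hG (e j)]
    rw [hsum, Fintype.sum_prod_type]
    have : ∀ a : Fin (n + 1) → Mon mv d, (∑ k' : Fin (n + 1) → Mon mv d,
        if k = a then (monomial (expo k') (R a k') : PSpace (fun _ : Fin (n + 1) => mv)) else 0)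
        = if k = a then q a else 0 := by
      intro a
      by_cases hk : k = a
      · simp only [if_pos hk, hq]
      · simp only [if_neg hk, Finset.sum_const_zero]
    simp_rw [this]
    rw [Finset.sum_ite_eq Finset.univ k (fun a => q a), if_pos (Finset.mem_univ k)]
  exact ⟨q, fun g k => ha g k, by rw [hb], ⟨Fintype.card SS, ql, fun k => hcfact k⟩⟩

end
end PolyDec
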